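/- arXiv:1703.00591 — 2 statements merged into one kernel-verified Lean document; each statement's English description precedes it below -/
import Mathlib

section
/- For any nonsingular W ∈ ℝ^{n×n}, the matrix Bdiag_{τ_n}(Wᵀ W) is symmetric positive definite, and W · [Bdiag_{τ_n}(Wᵀ W)]^{−1/2} belongs to 𝕎_{τ_n}, where [·]^{−1/2} denotes the inverse of the symmetric positive definite square root. -/
open Matrix BigOperators Kronecker
open scoped ENNReal

namespace JBD

/-- Index type for `τ_n`-block partitioned `n×n` matrices, where the partition
`τ_n = (n 0, …, n (t-1))`. -/
abbrev BlkIdx {t : ℕ} (n : Fin t → ℕ) := Σ j : Fin t, Fin (n j)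

variable {t : ℕ} {n : Fin t → ℕ}

/-- The `τ_n`-block diagonal part `Bdiag_{τ_n}(A)`. -/
def bdiag (A : Matrix (BlkIdx n) (BlkIdx n) ℝ) : Matrix (BlkIdx n) (BlkIdx n) ℝ :=
  fun p q => if p.1 = q.1 then A p q else 0

/-- The `τ_n`-off-block diagonal part `OffBdiag_{τ_n}(A)`. -/
def offBdiag (A : Matrix (BlkIdx n) (BlkIdx n) ℝ) : Matrix (BlkIdx n) (BlkIdx n) ℝ :=
  A - bdiag A

/-- `A ∈ 𝔻_{τ_n}`, i.e. `A` is `τ_n`-block diagonal. -/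
def IsBlockDiag (A : Matrix (BlkIdx n) (BlkIdx n) ℝ) : Prop :=
  ∀ p q : BlkIdx n, p.1 ≠ q.1 → A p q = 0

/-- `P` is a permutation matrix. -/
def IsPermMatrix {I : Type*} [DecidableEq I] [Fintype I] (P : Matrix I I ℝ) : Prop :=
  ∃ σ : Equiv.Perm I, P = σ.permMatrix ℝ

/-- `P ∈ ℙ_{τ_n}`: a `τ_n`-block diagonal preserving permutation matrix. -/
def IsBDPerm (P : Matrix (BlkIdx n) (BlkIdx n) ℝ) : Prop :=
  IsPermMatrix P ∧
    ∀ D : Matrix (BlkIdx n) (BlkIdx n) ℝ, IsBlockDiag D → IsBlockDiag (Pᵀ * D * P)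

/-- `W ∈ 𝕎_{τ_n}`: nonsingular with `Bdiag_{τ_n}(Wᵀ W) = I`. -/
def MemW (W : Matrix (BlkIdx n) (BlkIdx n) ℝ) : Prop :=
  IsUnit W ∧ bdiag (Wᵀ * W) = 1

/-- `W` is a `τ_n`-block diagonalizer of the matrix set `𝒜 = {A i}`. -/
def IsDiagonalizer {m : ℕ} (A : Fin m → Matrix (BlkIdx n) (BlkIdx n) ℝ)
    (W : Matrix (BlkIdx n) (BlkIdx n) ℝ) : Prop :=
  IsUnit W ∧ ∀ i, IsBlockDiag (Wᵀ * A i * W)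

/-- The JBDP for `𝒜` is uniquely `τ_n`-block diagonalizable. -/
def UniquelyBD {m : ℕ} (A : Fin m → Matrix (BlkIdx n) (BlkIdx n) ℝ) : Prop :=
  (∃ W, IsDiagonalizer A W) ∧
    ∀ W W', IsDiagonalizer A W → IsDiagonalizer A W' →
      ∃ D P : Matrix (BlkIdx n) (BlkIdx n) ℝ,
        IsBlockDiag D ∧ IsUnit D ∧ IsBDPerm P ∧ W' = W * D * P

/-- The `j`-th diagonal block of a `τ_n`-partitioned matrix. -/
def dblock (A : Matrix (BlkIdx n) (BlkIdx n) ℝ) (j : Fin t) :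
    Matrix (Fin (n j)) (Fin (n j)) ℝ := fun x y => A ⟨j, x⟩ ⟨j, y⟩

/-- A family `B = {B i}` of `N×N` matrices can be (further) simultaneously block
diagonalized by congruence, with respect to some partition of `N` of cardinality `≥ 2`. -/
def CanSplit {N m : ℕ} (B : Fin m → Matrix (Fin N) (Fin N) ℝ) : Prop :=
  ∃ (s : ℕ) (k : Fin s → ℕ), 2 ≤ s ∧ (∀ j, 0 < k j) ∧ (∑ j, k j) = N ∧
    ∃ (e : Fin N ≃ BlkIdx k) (V : Matrix (Fin N) (Fin N) ℝ), IsUnit V ∧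
      ∀ i, IsBlockDiag (Matrix.reindex e e (Vᵀ * B i * V))

/-- The subspace `𝒩(ℬ) = {Z : B i * Z - Zᵀ * B i = 0 for all i}`. -/
def nSubmodule {m : ℕ} {I : Type*} [Fintype I] (B : Fin m → Matrix I I ℝ) :
    Submodule ℝ (Matrix I I ℝ) where
  carrier := {Z | ∀ i, B i * Z - Zᵀ * B i = 0}
  add_mem' := by
    intro a b ha hb i
    have h1 := ha i
    have h2 := hb i
    have : (B i * a - aᵀ * B i) + (B i * b - bᵀ * B i) = 0 := by rw [h1, h2, add_zero]
    calc B i * (a + b) - (a + b)ᵀ * B i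
        = (B i * a - aᵀ * B i) + (B i * b - bᵀ * B i) := by
          rw [Matrix.mul_add, Matrix.transpose_add, Matrix.add_mul]; abel
      _ = 0 := this
  zero_mem' := by intro i; simp
  smul_mem' := by
    intro c Z hZ i
    have h := hZ i
    calc B i * (c • Z) - (c • Z)ᵀ * B i = c • (B i * Z - Zᵀ * B i) := by
          rw [Matrix.mul_smul, Matrix.transpose_smul, Matrix.smul_mul, smul_sub]
      _ = 0 := by rw [h, smul_zero]

/-- Frobenius norm. -/
noncomputable def frob {I J : Type*} [Fintype I] [Fintype J] (A : Matrix I J ℝ) : ℝ :=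
  Real.sqrt (∑ i, ∑ j, (A i j) ^ 2)

/-- Spectral norm (operator 2-norm). -/
noncomputable def spec {I : Type*} [Fintype I] [DecidableEq I] (A : Matrix I I ℝ) : ℝ :=
  ‖Matrix.toEuclideanCLM (𝕜 := ℝ) A‖

/-- Singular values of a real matrix: square roots of the eigenvalues of `Aᵀ * A`
(one for each column index). -/
noncomputable def sv {I J : Type*} [Fintype I] [Fintype J] [DecidableEq J]
    (A : Matrix I J ℝ) (k : J) : ℝ :=
  Real.sqrt ((show (Aᵀ * A).IsHermitian by
    simpa [Matrix.conjTranspose_eq_transpose_of_trivial] using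
      Matrix.isHermitian_conjTranspose_mul_self A).eigenvalues k)

/-- The smallest singular value. -/
noncomputable def sigmaMin {I J : Type*} [Fintype I] [Fintype J] [DecidableEq J]
    (A : Matrix I J ℝ) : ℝ :=
  ⨅ k : J, sv A k

/-- The smallest nonzero singular value. -/
noncomputable def minNonzeroSV {I J : Type*} [Fintype I] [Fintype J] [DecidableEq J]
    (A : Matrix I J ℝ) : ℝ :=
  sInf {s | (∃ k, sv A k = s) ∧ s ≠ 0}

/-- The list of singular values sorted in increasing order. -/
noncomputable def svSorted {I J : Type*} [Fintype I] [Fintype J] [DecidableEq J]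
    (A : Matrix I J ℝ) : List ℝ :=
  (Finset.univ.val.map (sv A)).sort (· ≤ ·)

/-- The second smallest singular value. -/
noncomputable def secondSmallestSV {I J : Type*} [Fintype I] [Fintype J] [DecidableEq J]
    (A : Matrix I J ℝ) : ℝ :=
  (svSorted A).getD 1 0

/-- The matrix `G_{jk}` (for `j < k`), built from the diagonal blocks
`Aj i = A_i^{(jj)}` (size `a`) and `Ak i = A_i^{(kk)}` (size `b`). -/
noncomputable def Gjk {m a b : ℕ} (Aj : Fin m → Matrix (Fin a) (Fin a) ℝ)
    (Ak : Fin m → Matrix (Fin b) (Fin b) ℝ) :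
    Matrix (Fin m × ((Fin b × Fin a) ⊕ (Fin b × Fin a))) ((Fin b × Fin a) ⊕ (Fin b × Fin a)) ℝ :=
  fun r c =>
    Matrix.fromBlocks
      ((1 : Matrix (Fin b) (Fin b) ℝ) ⊗ₖ Aj r.1) ((Ak r.1)ᵀ ⊗ₖ (1 : Matrix (Fin a) (Fin a) ℝ))
      ((1 : Matrix (Fin b) (Fin b) ℝ) ⊗ₖ (Aj r.1)ᵀ) (Ak r.1 ⊗ₖ (1 : Matrix (Fin a) (Fin a) ℝ))
      r.2 c

/-- Column-major vectorization: `vecM Z (c, r) = Z r c`. -/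
def vecM {a b : ℕ} (Z : Matrix (Fin a) (Fin b) ℝ) : Fin b × Fin a → ℝ :=
  fun p => Z p.2 p.1

/-- The perfect-shuffle permutation matrix `Π_j`, satisfying
`shuffle a *ᵥ vecM Zᵀ = vecM Z`. -/
def shuffle (a : ℕ) : Matrix (Fin a × Fin a) (Fin a × Fin a) ℝ :=
  fun p q => if q = p.swap then 1 else 0

/-- The matrix `G_{jj}`, built from the diagonal blocks `Aj i = A_i^{(jj)}` (size `a`):
its `i`-th block row is `I ⊗ Aj i - ((Aj i)ᵀ ⊗ I) * Π_j`. -/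
noncomputable def Gjj {m a : ℕ} (Aj : Fin m → Matrix (Fin a) (Fin a) ℝ) :
    Matrix (Fin m × (Fin a × Fin a)) (Fin a × Fin a) ℝ :=
  fun r c =>
    ((1 : Matrix (Fin a) (Fin a) ℝ) ⊗ₖ Aj r.1
      - ((Aj r.1)ᵀ ⊗ₖ (1 : Matrix (Fin a) (Fin a) ℝ)) * shuffle a) r.2 c

/-- The matrix `M_{jk}` from Theorem 2.1, `M_{jk} = G_{jk}ᵀ G_{jk}`. -/
noncomputable def Mjk {m a b : ℕ} (Aj : Fin m → Matrix (Fin a) (Fin a) ℝ)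
    (Ak : Fin m → Matrix (Fin b) (Fin b) ℝ) :
    Matrix ((Fin b × Fin a) ⊕ (Fin b × Fin a)) ((Fin b × Fin a) ⊕ (Fin b × Fin a)) ℝ :=
  ∑ i, Matrix.fromBlocks
    ((1 : Matrix (Fin b) (Fin b) ℝ) ⊗ₖ ((Aj i)ᵀ * Aj i + Aj i * (Aj i)ᵀ))
    (Ak i ⊗ₖ Aj i + (Ak i)ᵀ ⊗ₖ (Aj i)ᵀ)
    (Ak i ⊗ₖ Aj i + (Ak i)ᵀ ⊗ₖ (Aj i)ᵀ)
    (((Ak i)ᵀ * Ak i + Ak i * (Ak i)ᵀ) ⊗ₖ (1 : Matrix (Fin a) (Fin a) ℝ))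

/-- The modulus of uniqueness `ω_uniq = min_{j<k} σ_min(G_{jk})`, in terms of the
family of diagonal blocks `Ab j i = A_i^{(jj)}`. -/
noncomputable def omegaUniq {m : ℕ}
    (Ab : ∀ j : Fin t, Fin m → Matrix (Fin (n j)) (Fin (n j)) ℝ) : ℝ :=
  ⨅ p : {p : Fin t × Fin t // p.1 < p.2}, sigmaMin (Gjk (Ab p.1.1) (Ab p.1.2))

/-- The modulus of non-divisibility `ω_rob` (`+∞` when `τ_n = (1,…,1)`), in terms of
the family of diagonal blocks `Ab j i = A_i^{(jj)}`. -/
noncomputable def omegaRob {m : ℕ}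
    (Ab : ∀ j : Fin t, Fin m → Matrix (Fin (n j)) (Fin (n j)) ℝ) : ℝ≥0∞ :=
  ⨅ (j : Fin t) (_ : 1 < n j), ENNReal.ofReal (minNonzeroSV (Gjj (Ab j)))

/-- The matrix `Γ = diag(γ_1 I_{n_1}, …, γ_t I_{n_t})`. -/
def gmat (γ : Fin t → ℝ) : Matrix (BlkIdx n) (BlkIdx n) ℝ :=
  Matrix.diagonal (fun p => γ p.1)

/-- The gap `g = min_{j ≠ k} |γ_j - γ_k|`. -/
noncomputable def gammaGap (γ : Fin t → ℝ) : ℝ :=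
  ⨅ p : {p : Fin t × Fin t // p.1 ≠ p.2}, |γ p.1.1 - γ p.1.2|

/-- The multiset of complex eigenvalues (with algebraic multiplicity) of a real
square matrix: the roots of its characteristic polynomial over `ℂ`. -/
noncomputable def eigMultiset {I : Type*} [Fintype I] [DecidableEq I]
    (Z : Matrix I I ℝ) : Multiset ℂ :=
  (Z.map (Complex.ofReal)).charpoly.roots

/-- The `j`-th block column of `P`, with its `j`-th (diagonal) block replaced by `0`:
the matrix `P̂_j`. -/
def hatColumn (P : Matrix (BlkIdx n) (BlkIdx n) ℝ) (j : Fin t) :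
    Matrix (BlkIdx n) (Fin (n j)) ℝ :=
  fun p y => if p.1 = j then 0 else P p ⟨j, y⟩

/-! The block-diagonal part is the pinching `A ↦ ∑ⱼ Pⱼ A Pⱼ` by the orthogonal projections `Pⱼ`
onto the coordinate blocks. Pinching a positive definite matrix keeps it positive definite, and
commutes with congruence by any matrix commuting with every `Pⱼ`. The `Pⱼ` commute with
`Bdiag(Wᵀ W) = S²`, hence with its positive square root `S` and with `S⁻¹`; therefore
`Bdiag((W S⁻¹)ᵀ (W S⁻¹)) = S⁻¹ Bdiag(Wᵀ W) S⁻¹ = S⁻¹ S² S⁻¹ = 1`. -/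

open scoped ComplexOrder MatrixOrder in
theorem _root_.Matrix.PosSemidef.commute_of_commute_mul_self {𝕜 ι : Type*} [RCLike 𝕜]
    [Fintype ι] [DecidableEq ι] {S P : Matrix ι ι 𝕜} (hS : S.PosSemidef)
    (h : Commute (S * S) P) : Commute S P := by
  rw [← CFC.sqrt_mul_self S hS.nonneg]
  exact h.cfcₙ_nnreal _

def blockProj (j : Fin t) : Matrix (BlkIdx n) (BlkIdx n) ℝ :=
  diagonal fun p => if p.1 = j then 1 else 0

lemma bdiag_eq_sum_blockProj (A : Matrix (BlkIdx n) (BlkIdx n) ℝ) :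
    bdiag A = ∑ j, blockProj j * A * blockProj j := by
  ext p q
  simp [bdiag, blockProj, Matrix.sum_apply, diagonal_mul, mul_diagonal]

lemma commute_blockProj_bdiag (j : Fin t) (A : Matrix (BlkIdx n) (BlkIdx n) ℝ) :
    Commute (blockProj j) (bdiag A) := by
  ext p q
  simp only [blockProj, bdiag, diagonal_mul, mul_diagonal, mul_ite, ite_mul, one_mul, zero_mul,
    mul_zero, mul_one]
  grind

lemma bdiag_mul_mul {D E : Matrix (BlkIdx n) (BlkIdx n) ℝ} (hD : ∀ j, Commute (blockProj j) D)
    (hE : ∀ j, Commute (blockProj j) E) (M : Matrix (BlkIdx n) (BlkIdx n) ℝ) :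
    bdiag (D * M * E) = D * bdiag M * E := by
  simp only [bdiag_eq_sum_blockProj, Finset.mul_sum, Finset.sum_mul]
  refine Finset.sum_congr rfl fun j _ => ?_
  simp only [← Matrix.mul_assoc, (hD j).eq]
  simp only [Matrix.mul_assoc, (hE j).eq]

lemma posDef_bdiag {A : Matrix (BlkIdx n) (BlkIdx n) ℝ} (hA : A.PosDef) : (bdiag A).PosDef := by
  refine .of_dotProduct_mulVec_pos ?_ fun x hx => ?_
  · ext p q
    simp [bdiag, eq_comm, ← hA.isHermitian.apply p q]
  · obtain ⟨p, hp⟩ := Function.ne_iff.mp hx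
    have hvecMul (j : Fin t) : x ᵥ* blockProj j = blockProj j *ᵥ x := by
      ext q
      simp [blockProj, vecMul_diagonal, mulVec_diagonal, mul_comm]
    have hquad (j : Fin t) : x ⬝ᵥ (blockProj j * A * blockProj j) *ᵥ x =
        (blockProj j *ᵥ x) ⬝ᵥ A *ᵥ (blockProj j *ᵥ x) := by
      rw [← mulVec_mulVec, ← mulVec_mulVec, dotProduct_mulVec, hvecMul]
    have hblock : blockProj p.1 *ᵥ x ≠ 0 :=
      Function.ne_iff.mpr ⟨p, by simpa [blockProj, mulVec_diagonal] using hp⟩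
    simp only [star_trivial, bdiag_eq_sum_blockProj, Matrix.sum_mulVec, dotProduct_sum, hquad]
    exact Finset.sum_pos' (fun j _ => hA.posSemidef.dotProduct_mulVec_nonneg _)
      ⟨p.1, Finset.mem_univ _, hA.dotProduct_mulVec_pos hblock⟩

theorem normalize_mem_W_general {t : ℕ} {n : Fin t → ℕ}
    (W : Matrix (BlkIdx n) (BlkIdx n) ℝ) (hW : IsUnit W) :
    (bdiag (Wᵀ * W)).PosDef ∧
      ∀ S : Matrix (BlkIdx n) (BlkIdx n) ℝ, S.PosDef → S * S = bdiag (Wᵀ * W) →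
        MemW (W * S⁻¹) := by
  have hWW : (Wᵀ * W).PosDef := .conjTranspose_mul_self W (mulVec_injective_iff_isUnit.mpr hW)
  refine ⟨posDef_bdiag hWW, fun S hS hSS => ?_⟩
  have hcomm (j : Fin t) : Commute (blockProj j) S⁻¹ := by
    have hS_comm : Commute S (blockProj j) :=
      hS.posSemidef.commute_of_commute_mul_self (hSS ▸ (commute_blockProj_bdiag j _).symm)
    obtain ⟨u, rfl⟩ := hS.isUnit
    rw [← coe_units_inv]
    exact hS_comm.symm.units_inv_right
  have hsymm : S⁻¹ᵀ = S⁻¹ := by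
    rw [transpose_nonsing_inv, ← conjTranspose_eq_transpose_of_trivial, hS.isHermitian.eq]
  refine ⟨hW.mul (isUnit_nonsing_inv_iff.mpr hS.isUnit), ?_⟩
  have hdet : IsUnit S.det := (isUnit_iff_isUnit_det S).mp hS.isUnit
  calc bdiag ((W * S⁻¹)ᵀ * (W * S⁻¹))
      = bdiag (S⁻¹ * (Wᵀ * W) * S⁻¹) := by
        rw [transpose_mul, hsymm]; simp only [Matrix.mul_assoc]
    _ = S⁻¹ * (S * S) * S⁻¹ := by rw [bdiag_mul_mul hcomm hcomm, hSS]
    _ = 1 := by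
      rw [Matrix.mul_assoc, Matrix.mul_assoc, mul_nonsing_inv S hdet, mul_one,
        nonsing_inv_mul S hdet]

/-- for nonsingular `W`, `Bdiag(Wᵀ W)` is symmetric positive definite and
`W * S⁻¹ ∈ 𝕎_{τ_n}` where `S` is the SPD square root of `Bdiag(Wᵀ W)`. -/
theorem normalize_mem_W {t : ℕ} {n : Fin t → ℕ} (hn : ∀ j, 0 < n j)
    (W : Matrix (BlkIdx n) (BlkIdx n) ℝ) (hW : IsUnit W) :
    (bdiag (Wᵀ * W)).PosDef ∧
      ∀ S : Matrix (BlkIdx n) (BlkIdx n) ℝ, S.PosDef → S * S = bdiag (Wᵀ * W) →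
        MemW (W * S⁻¹) :=
  normalize_mem_W_general W hW

end JBD
end

section
/- Suppose 𝒜 = {A_i}_{i=1}^m is uniquely τ_n-block diagonalizable and W, W̃ ∈ 𝕎_{τ_n} are two τ_n-block diagonalizers of 𝒜, with Wᵀ A_i W = diag(A_i^{(11)},…,A_i^{(tt)}) and W̃ᵀ A_i W̃ = diag(Ã_i^{(11)},…,Ã_i^{(tt)}). Then ω_uniq(𝒜;W) = ω_uniq(𝒜;W̃), and if none of the sets {A_i^{(jj)}}_i can be further block diagonalized then also ω_rob(𝒜;W) = ω_rob(𝒜;W̃); i.e., the moduli of uniqueness and non-divisibility are independent of the choice of τ_n-block diagonalizer in 𝕎_{τ_n}. -/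
open Matrix BigOperators Kronecker
open scoped ENNReal

namespace JBD

variable {t : ℕ} {n : Fin t → ℕ}

/-!
By uniqueness, `W' = W D Π`, so for a permutation `τ` of the blocks the `τ j`-th block column of
`W'` is the `j`-th block column of `W` times `Q_j`, the `(j, τ j)` block of `D Π`; hence
`Ã_i^{(τj,τj)} = Q_jᵀ A_i^{(jj)} Q_j`. The normalisation `Bdiag(WᵀW) = I = Bdiag(W'ᵀW')` forces
`Q_jᵀ Q_j = I`. An orthogonal congruence of the blocks multiplies `G_{jk}` and `G_{jj}` on both
sides by orthogonal matrices (Kronecker products of the `Q_j`, which commute with the perfect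
shuffle), so `GᵀG` is conjugated orthogonally and the singular values do not change; exchanging
`j` and `k` only permutes the rows and columns of `G_{jk}`. Both moduli are therefore the same
infima, reindexed by `τ`.
-/

section SingularValues

variable {ι κ ι' κ' : Type*} [Fintype ι] [Fintype κ] [Fintype ι'] [Fintype κ']
  [DecidableEq κ] [DecidableEq κ']

lemma range_sv_eq_sqrt_image_roots (A : Matrix ι κ ℝ) :
    Set.range (sv A) = Real.sqrt '' {x | x ∈ (Aᵀ * A).charpoly.roots} := by
  have hA : (Aᵀ * A).IsHermitian := by
    simpa [conjTranspose_eq_transpose_of_trivial] using isHermitian_conjTranspose_mul_self A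
  rw [hA.roots_charpoly_eq_eigenvalues]
  ext s
  simp [sv]

lemma range_sv_eq_of_charpoly_eq {A : Matrix ι κ ℝ} {B : Matrix ι' κ' ℝ}
    (h : (Bᵀ * B).charpoly = (Aᵀ * A).charpoly) : Set.range (sv B) = Set.range (sv A) := by
  rw [range_sv_eq_sqrt_image_roots, range_sv_eq_sqrt_image_roots, h]

lemma range_sv_submatrix (A : Matrix ι κ ℝ) (e₁ : ι' ≃ ι) (e₂ : κ' ≃ κ) :
    Set.range (sv (A.submatrix e₁ e₂)) = Set.range (sv A) := by
  apply range_sv_eq_of_charpoly_eq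
  rw [transpose_submatrix, submatrix_mul_equiv _ _ _ e₁]
  simpa [reindex_apply] using charpoly_reindex e₂.symm (Aᵀ * A)

lemma sigmaMin_eq_of_range_sv_eq {A : Matrix ι κ ℝ} {B : Matrix ι' κ' ℝ}
    (h : Set.range (sv B) = Set.range (sv A)) : sigmaMin B = sigmaMin A :=
  congrArg sInf h

lemma minNonzeroSV_eq_of_range_sv_eq {A : Matrix ι κ ℝ} {B : Matrix ι' κ' ℝ}
    (h : Set.range (sv B) = Set.range (sv A)) : minNonzeroSV B = minNonzeroSV A :=
  congrArg (fun S : Set ℝ => sInf {s | s ∈ S ∧ s ≠ 0}) h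

end SingularValues

section Stacking

variable {ι T C : Type*} [Fintype ι] [Fintype T]

def vstack (L : ι → Matrix T C ℝ) : Matrix (ι × T) C ℝ :=
  Matrix.of fun r c => L r.1 r.2 c

lemma vstack_transpose_mul_self (L : ι → Matrix T C ℝ) :
    (vstack L)ᵀ * vstack L = ∑ i, (L i)ᵀ * L i := by
  ext c d
  simp [vstack, mul_apply, Matrix.sum_apply, Fintype.sum_prod_type]

lemma range_sv_vstack_conj [DecidableEq T] {L L' : ι → Matrix T T ℝ} (O : Matrix T T ℝ)
    (hO : Oᵀ * O = 1) (hL : ∀ i, L' i = Oᵀ * L i * O) :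
    Set.range (sv (vstack L')) = Set.range (sv (vstack L)) := by
  have hO' : O * Oᵀ = 1 := mul_eq_one_comm.mp hO
  have hconj : (vstack L')ᵀ * vstack L' = Oᵀ * ((vstack L)ᵀ * vstack L) * O := by
    simp only [vstack_transpose_mul_self, hL, Finset.mul_sum, Finset.sum_mul, transpose_mul,
      transpose_transpose]
    refine Finset.sum_congr rfl fun i _ => ?_
    calc Oᵀ * ((L i)ᵀ * O) * (Oᵀ * L i * O) = Oᵀ * (L i)ᵀ * (O * Oᵀ) * L i * O := by
          simp only [Matrix.mul_assoc]
      _ = Oᵀ * ((L i)ᵀ * L i) * O := by rw [hO', Matrix.mul_one, Matrix.mul_assoc (Oᵀ)]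
  apply range_sv_eq_of_charpoly_eq
  rw [hconj, charpoly_mul_comm, ← Matrix.mul_assoc, hO', Matrix.one_mul]

end Stacking

section Kronecker

variable {a b : Type*} [Fintype a] [Fintype b]

lemma kronecker_conj (R M : Matrix b b ℝ) (Q N : Matrix a a ℝ) :
    (R ⊗ₖ Q)ᵀ * (M ⊗ₖ N) * (R ⊗ₖ Q) = (Rᵀ * M * R) ⊗ₖ (Qᵀ * N * Q) := by
  rw [← kroneckerMap_transpose, ← mul_kronecker_mul, ← mul_kronecker_mul]

lemma kronecker_transpose_mul_self [DecidableEq a] [DecidableEq b] {Q : Matrix a a ℝ}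
    {R : Matrix b b ℝ} (hQ : Qᵀ * Q = 1) (hR : Rᵀ * R = 1) : (R ⊗ₖ Q)ᵀ * (R ⊗ₖ Q) = 1 := by
  rw [← kroneckerMap_transpose, ← mul_kronecker_mul, hQ, hR, one_kronecker_one]

lemma shuffle_mul_kronecker {k : ℕ} (X Y : Matrix (Fin k) (Fin k) ℝ) :
    shuffle k * (X ⊗ₖ Y) = (Y ⊗ₖ X) * shuffle k := by
  ext ⟨q, p⟩ ⟨q', p'⟩
  simp [shuffle, mul_apply, Prod.ext_iff, Fintype.sum_prod_type, ite_and, mul_comm]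

end Kronecker

section CongruenceInvariance

variable {m a a' b b' : ℕ}

lemma Gjk_eq_vstack (Aj : Fin m → Matrix (Fin a) (Fin a) ℝ)
    (Ak : Fin m → Matrix (Fin b) (Fin b) ℝ) :
    Gjk Aj Ak = vstack fun i =>
      fromBlocks (1 ⊗ₖ Aj i) ((Ak i)ᵀ ⊗ₖ 1) (1 ⊗ₖ (Aj i)ᵀ) (Ak i ⊗ₖ 1) :=
  rfl

lemma Gjj_eq_vstack (Aj : Fin m → Matrix (Fin a) (Fin a) ℝ) :
    Gjj Aj = vstack fun i => 1 ⊗ₖ Aj i - ((Aj i)ᵀ ⊗ₖ 1) * shuffle a :=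
  rfl

lemma range_sv_Gjk_conj {Aj : Fin m → Matrix (Fin a) (Fin a) ℝ}
    {Ak : Fin m → Matrix (Fin b) (Fin b) ℝ} {Aj' : Fin m → Matrix (Fin a') (Fin a') ℝ}
    {Ak' : Fin m → Matrix (Fin b') (Fin b') ℝ} (Q : Matrix (Fin a) (Fin a') ℝ)
    (R : Matrix (Fin b) (Fin b') ℝ) (ha : a = a') (hb : b = b') (hQ : Qᵀ * Q = 1)
    (hR : Rᵀ * R = 1) (hAj' : ∀ i, Aj' i = Qᵀ * Aj i * Q) (hAk' : ∀ i, Ak' i = Rᵀ * Ak i * R) :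
    Set.range (sv (Gjk Aj' Ak')) = Set.range (sv (Gjk Aj Ak)) := by
  subst ha hb
  have hX := kronecker_transpose_mul_self hQ hR
  rw [Gjk_eq_vstack, Gjk_eq_vstack]
  refine range_sv_vstack_conj (fromBlocks (R ⊗ₖ Q) 0 0 (R ⊗ₖ Q)) ?_ fun i => ?_
  · simp [fromBlocks_transpose, fromBlocks_multiply, hX]
  · simp [fromBlocks_transpose, fromBlocks_multiply, ← Matrix.mul_assoc, kronecker_conj, hQ, hR,
      hAj', hAk', transpose_mul]

lemma range_sv_Gjk_comm (Aj : Fin m → Matrix (Fin a) (Fin a) ℝ)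
    (Ak : Fin m → Matrix (Fin b) (Fin b) ℝ) :
    Set.range (sv (Gjk Ak Aj)) = Set.range (sv (Gjk Aj Ak)) := by
  let ρ : (Fin a × Fin b) ⊕ (Fin a × Fin b) ≃ (Fin b × Fin a) ⊕ (Fin b × Fin a) :=
    (Equiv.sumCongr (Equiv.prodComm _ _) (Equiv.prodComm _ _)).trans (Equiv.sumComm _ _)
  have hswap : Gjk Ak Aj = (Gjk Aj Ak).submatrix (Equiv.prodCongr (Equiv.refl _) ρ) ρ := by
    ext ⟨i, u | u⟩ (v | v) <;> simp [Gjk, ρ, one_apply, mul_comm]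
  rw [hswap, range_sv_submatrix]

lemma range_sv_Gjj_conj {Aj : Fin m → Matrix (Fin a) (Fin a) ℝ}
    {Aj' : Fin m → Matrix (Fin a') (Fin a') ℝ} (Q : Matrix (Fin a) (Fin a') ℝ) (ha : a = a')
    (hQ : Qᵀ * Q = 1) (hAj' : ∀ i, Aj' i = Qᵀ * Aj i * Q) :
    Set.range (sv (Gjj Aj')) = Set.range (sv (Gjj Aj)) := by
  subst ha
  rw [Gjj_eq_vstack, Gjj_eq_vstack]
  refine range_sv_vstack_conj (Q ⊗ₖ Q) (kronecker_transpose_mul_self hQ hQ) fun i => ?_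
  rw [Matrix.mul_sub, Matrix.sub_mul, Matrix.mul_assoc _ (_ * shuffle a),
    Matrix.mul_assoc _ (shuffle a), shuffle_mul_kronecker, ← Matrix.mul_assoc, ← Matrix.mul_assoc,
    kronecker_conj, kronecker_conj]
  simp [hQ, hAj', transpose_mul, Matrix.mul_assoc]

end CongruenceInvariance

section BlockStructure

lemma sum_sigma_eq_of_forall_fst_ne {α M : Type*} {β : α → Type*} [Fintype α]
    [∀ a, Fintype (β a)] [AddCommMonoid M] (f : (Σ a, β a) → M) (a : α)
    (hf : ∀ p, p.1 ≠ a → f p = 0) : ∑ p, f p = ∑ x, f ⟨a, x⟩ := by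
  rw [Fintype.sum_sigma, Finset.sum_eq_single a
    (fun b _ hb => Finset.sum_eq_zero fun x _ => hf ⟨b, x⟩ hb) (by simp)]

def block (V : Matrix (BlkIdx n) (BlkIdx n) ℝ) (j k : Fin t) :
    Matrix (Fin (n j)) (Fin (n k)) ℝ :=
  fun x y => V ⟨j, x⟩ ⟨k, y⟩

lemma dblock_transpose_mul_mul {τ : Fin t → Fin t} (hτ : Function.Injective τ)
    {V : Matrix (BlkIdx n) (BlkIdx n) ℝ} (hV : ∀ p q, τ p.1 ≠ q.1 → V p q = 0)
    (M : Matrix (BlkIdx n) (BlkIdx n) ℝ) (j : Fin t) :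
    dblock (Vᵀ * M * V) (τ j) = (block V j (τ j))ᵀ * dblock M j * block V j (τ j) := by
  have hcol : ∀ (p : BlkIdx n) (x : Fin (n (τ j))), p.1 ≠ j → V p ⟨τ j, x⟩ = 0 :=
    fun p x hp => hV p _ (hτ.ne hp)
  ext x y
  simp only [dblock, block, mul_apply, transpose_apply]
  rw [sum_sigma_eq_of_forall_fst_ne _ j fun q hq => by rw [hcol q y hq, mul_zero]]
  refine Finset.sum_congr rfl fun z _ => ?_
  rw [sum_sigma_eq_of_forall_fst_ne _ j fun p hp => by rw [hcol p x hp, zero_mul]]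

lemma MemW.dblock_transpose_mul_self {W : Matrix (BlkIdx n) (BlkIdx n) ℝ} (hW : MemW W)
    (j : Fin t) : dblock (Wᵀ * W) j = 1 := by
  ext x y
  have h := congrFun (congrFun hW.2 ⟨j, x⟩) ⟨j, y⟩
  simpa [dblock, bdiag, one_apply] using h

lemma IsBDPerm.exists_perm (hn : ∀ j, 0 < n j) {P : Matrix (BlkIdx n) (BlkIdx n) ℝ}
    (hP : IsBDPerm P) : ∃ (σ : Equiv.Perm (BlkIdx n)) (τ : Equiv.Perm (Fin t)),
      P = σ.permMatrix ℝ ∧ ∀ p, (σ p).1 = τ p.1 := by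
  obtain ⟨⟨σ, rfl⟩, hpres⟩ := hP
  have hblk : ∀ p q : BlkIdx n, p.1 = q.1 → (σ p).1 = (σ q).1 := by
    intro p q hpq
    by_contra hne
    have hsingle : IsBlockDiag (single p q (1 : ℝ)) := by
      intro r s hrs
      rw [single_apply_of_ne]
      rintro ⟨rfl, rfl⟩
      exact hrs hpq
    have := hpres _ hsingle (σ p) (σ q) hne
    simp [PEquiv.toMatrix_toPEquiv_mul, PEquiv.mul_toMatrix_toPEquiv] at this
  let τ : Fin t → Fin t := fun j => (σ ⟨j, ⟨0, hn j⟩⟩).1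
  have hτ : ∀ p, (σ p).1 = τ p.1 := fun p => hblk p _ rfl
  have hsurj : Function.Surjective τ := fun k =>
    ⟨(σ.symm ⟨k, ⟨0, hn k⟩⟩).1, by rw [← hτ, σ.apply_symm_apply]⟩
  exact ⟨σ, Equiv.ofBijective τ ⟨Finite.injective_iff_surjective.mpr hsurj, hsurj⟩,
    rfl, hτ⟩

lemma blockSize_eq_of_perm (σ : Equiv.Perm (BlkIdx n)) (τ : Equiv.Perm (Fin t))
    (hστ : ∀ p, (σ p).1 = τ p.1) (j : Fin t) : n (τ j) = n j :=
  (Fin.equiv_iff_eq.mp ⟨(Equiv.sigmaSubtype j).symm.trans <|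
    (σ.subtypeEquiv fun p => by rw [hστ, τ.injective.eq_iff]).trans
      (Equiv.sigmaSubtype (τ j))⟩).symm

def BlockOrthCongr {m : ℕ} (Ab Ab' : ∀ j : Fin t, Fin m → Matrix (Fin (n j)) (Fin (n j)) ℝ) :
    Prop :=
  ∃ τ : Equiv.Perm (Fin t), (∀ j, n (τ j) = n j) ∧
    ∀ j, ∃ Q : Matrix (Fin (n j)) (Fin (n (τ j))) ℝ,
      Qᵀ * Q = 1 ∧ ∀ i, Ab' (τ j) i = Qᵀ * Ab j i * Q

lemma blockOrthCongr_dblock_of_uniquelyBD {m : ℕ} (hn : ∀ j, 0 < n j)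
    {A : Fin m → Matrix (BlkIdx n) (BlkIdx n) ℝ} (hU : UniquelyBD A)
    {W W' : Matrix (BlkIdx n) (BlkIdx n) ℝ} (hWmem : MemW W) (hW'mem : MemW W')
    (hW : IsDiagonalizer A W) (hW' : IsDiagonalizer A W') :
    BlockOrthCongr (fun j i => dblock (Wᵀ * A i * W) j)
      (fun j i => dblock (W'ᵀ * A i * W') j) := by
  obtain ⟨D, P, hD, -, hP, rfl⟩ := hU.2 W W' hW hW'
  obtain ⟨σ, τ, rfl, hστ⟩ := hP.exists_perm hn
  set V := D * σ.permMatrix ℝ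
  have hV : ∀ p q, τ p.1 ≠ q.1 → V p q = 0 := by
    intro p q hpq
    simp only [V, PEquiv.mul_toMatrix_toPEquiv, submatrix_apply, id]
    exact hD _ _ fun h => hpq (by rw [h, ← hστ, σ.apply_symm_apply])
  have hconj : ∀ M, (W * V)ᵀ * M * (W * V) = Vᵀ * (Wᵀ * M * W) * V := fun M => by
    simp only [transpose_mul, Matrix.mul_assoc]
  rw [Matrix.mul_assoc W D] at hW'mem ⊢
  refine ⟨τ, blockSize_eq_of_perm σ τ hστ, fun j => ⟨block V j (τ j), ?_, fun i => ?_⟩⟩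
  · have h := hW'mem.dblock_transpose_mul_self (τ j)
    rwa [← Matrix.mul_one (W * V)ᵀ, hconj, Matrix.mul_one,
      dblock_transpose_mul_mul τ.injective hV, hWmem.dblock_transpose_mul_self,
      Matrix.mul_one] at h
  · exact (congrArg (dblock · (τ j)) (hconj (A i))).trans
      (dblock_transpose_mul_mul τ.injective hV _ j)

end BlockStructure

section Moduli

variable {m : ℕ}

lemma omegaUniq_eq_iInf_ne (Ab : ∀ j : Fin t, Fin m → Matrix (Fin (n j)) (Fin (n j)) ℝ) :
    omegaUniq Ab =
      ⨅ p : {p : Fin t × Fin t // p.1 ≠ p.2}, sigmaMin (Gjk (Ab p.1.1) (Ab p.1.2)) := by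
  refine congrArg sInf (Set.ext fun s => ⟨?_, ?_⟩)
  · rintro ⟨⟨⟨j, k⟩, hjk⟩, rfl⟩
    exact ⟨⟨(j, k), hjk.ne⟩, rfl⟩
  · rintro ⟨⟨⟨j, k⟩, hjk⟩, rfl⟩
    rcases hjk.lt_or_gt with h | h
    · exact ⟨⟨(j, k), h⟩, rfl⟩
    · exact ⟨⟨(k, j), h⟩, sigmaMin_eq_of_range_sv_eq (range_sv_Gjk_comm _ _)⟩

variable {Ab Ab' : ∀ j : Fin t, Fin m → Matrix (Fin (n j)) (Fin (n j)) ℝ}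

lemma omegaUniq_eq_of_blockOrthCongr (h : BlockOrthCongr Ab Ab') :
    omegaUniq Ab = omegaUniq Ab' := by
  symm
  obtain ⟨τ, hnτ, hblock⟩ := h
  let e : {p : Fin t × Fin t // p.1 ≠ p.2} ≃ {p : Fin t × Fin t // p.1 ≠ p.2} :=
    (τ.prodCongr τ).subtypeEquiv fun p => τ.injective.ne_iff.symm
  rw [omegaUniq_eq_iInf_ne, omegaUniq_eq_iInf_ne, ← e.iInf_comp]
  refine iInf_congr fun p => ?_
  obtain ⟨Q, hQ, hconjQ⟩ := hblock p.1.1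
  obtain ⟨R, hR, hconjR⟩ := hblock p.1.2
  exact sigmaMin_eq_of_range_sv_eq
    (range_sv_Gjk_conj Q R (hnτ _).symm (hnτ _).symm hQ hR hconjQ hconjR)

lemma omegaRob_eq_of_blockOrthCongr (h : BlockOrthCongr Ab Ab') :
    omegaRob Ab = omegaRob Ab' := by
  symm
  obtain ⟨τ, hnτ, hblock⟩ := h
  rw [omegaRob, ← τ.iInf_comp]
  refine iInf_congr fun j => ?_
  obtain ⟨Q, hQ, hconj⟩ := hblock j
  rw [minNonzeroSV_eq_of_range_sv_eq (range_sv_Gjj_conj Q (hnτ j).symm hQ hconj), hnτ j]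

end Moduli

/-- Theorem 2.3: for a uniquely `τ_n`-block diagonalizable `𝒜`, the moduli
`ω_uniq` and `ω_rob` do not depend on the choice of diagonalizer in `𝕎_{τ_n}`. -/
theorem omegaUniq_omegaRob_independent {t m : ℕ} {n : Fin t → ℕ} (hn : ∀ j, 0 < n j)
    (A : Fin m → Matrix (BlkIdx n) (BlkIdx n) ℝ) (hU : UniquelyBD A)
    (W W' : Matrix (BlkIdx n) (BlkIdx n) ℝ)
    (hWmem : MemW W) (hW'mem : MemW W')
    (hW : IsDiagonalizer A W) (hW' : IsDiagonalizer A W')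
    (Ab Ab' : ∀ j : Fin t, Fin m → Matrix (Fin (n j)) (Fin (n j)) ℝ)
    (hAb : ∀ j i, Ab j i = dblock (Wᵀ * A i * W) j)
    (hAb' : ∀ j i, Ab' j i = dblock (W'ᵀ * A i * W') j) :
    omegaUniq Ab = omegaUniq Ab' ∧
      ((∀ j, ¬ CanSplit (Ab j)) → omegaRob Ab = omegaRob Ab') := by
  obtain rfl : Ab = _ := funext₂ hAb
  obtain rfl : Ab' = _ := funext₂ hAb'
  have h := blockOrthCongr_dblock_of_uniquelyBD hn hU hWmem hW'mem hW hW'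
  exact ⟨omegaUniq_eq_of_blockOrthCongr h, fun _ => omegaRob_eq_of_blockOrthCongr h⟩

end JBD
end
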